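/- arXiv:2211.06301 — 2 statements merged into one kernel-verified Lean document; each statement's English description precedes it below -/
import Mathlib

section
/- Let K11 and K̄12 be n × n real matrices, K1 = K11 + K̄12, let f11, f̄12 : Fin n → ℝ, f1 = f11 + f̄12, let K2 be an n₂ × n₂ real matrix, f2 : Fin n₂ → ℝ, and let C1 be an m × n and C2 an m × n₂ real matrix. Then a triple (u1, u2, λ) is a fixed point of the non-invasive iteration, i.e. it satisfies (i) K1.mulVec u1 = f1 − C1ᵀ.mulVec λ + (K̄12.mulVec u1 − f̄12), (ii) K2.mulVec u2 − C2ᵀ.mulVec λ = f2, and (iii) C2.mulVec u2 = C1.mulVec u1, if and only if it solves the monolithic coupled system: K11.mulVec u1 + C1ᵀ.mulVec λ = f11, K2.mulVec u2 − C2ᵀ.mulVec λ = f2, and C1.mulVec u1 − C2.mulVec u2 = 0. -/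
open Matrix

/-- Fixed points of the non-invasive global/local iteration are exactly the solutions
of the monolithic Lagrange-multiplier coupled problem. -/
theorem fixed_point_iff_monolithic {n n₂ m : ℕ}
    (K11 K12bar K1 : Matrix (Fin n) (Fin n) ℝ) (hK1 : K1 = K11 + K12bar)
    (f11 f12bar f1 : Fin n → ℝ) (hf1 : f1 = f11 + f12bar)
    (K2 : Matrix (Fin n₂) (Fin n₂) ℝ) (f2 : Fin n₂ → ℝ)
    (C1 : Matrix (Fin m) (Fin n) ℝ) (C2 : Matrix (Fin m) (Fin n₂) ℝ)
    (u1 : Fin n → ℝ) (u2 : Fin n₂ → ℝ) (lam : Fin m → ℝ) :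
    (K1.mulVec u1 = f1 - C1ᵀ.mulVec lam + (K12bar.mulVec u1 - f12bar) ∧
      K2.mulVec u2 - C2ᵀ.mulVec lam = f2 ∧
      C2.mulVec u2 = C1.mulVec u1) ↔
    (K11.mulVec u1 + C1ᵀ.mulVec lam = f11 ∧
      K2.mulVec u2 - C2ᵀ.mulVec lam = f2 ∧
      C1.mulVec u1 - C2.mulVec u2 = 0) := by
  subst hK1 hf1
  rw [Matrix.add_mulVec]
  constructor
  · rintro ⟨h1, h2, h3⟩
    refine ⟨funext fun i => ?_, h2, by rw [h3]; simp⟩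
    have := congrFun h1 i
    simp only [Pi.add_apply, Pi.sub_apply] at this ⊢
    linarith
  · rintro ⟨h1, h2, h3⟩
    refine ⟨funext fun i => ?_, h2, (sub_eq_zero.mp h3).symm⟩
    have := congrFun h1 i
    simp only [Pi.add_apply, Pi.sub_apply] at this ⊢
    linarith
end

section
/- Let C_T be a symmetric invertible m × m real matrix, let C1 be an m × n and C2 an m × n₂ real matrix, and let T1, T2 be matrices with C1 = C_T * T1 and C2 = C_T * T2. Then for every λ : Fin m → ℝ one has C1ᵀ.mulVec λ = T1ᵀ.mulVec (C_T.mulVec λ); moreover, for any n₂ × n₂ real matrix K2, f2 : Fin n₂ → ℝ, u1 : Fin n → ℝ, u2 : Fin n₂ → ℝ and λ : Fin m → ℝ, the pair (u2, λ) satisfies K2.mulVec u2 − C2ᵀ.mulVec λ = f2 and C2.mulVec u2 = C1.mulVec u1 if and only if the pair (u2, λ̃) with λ̃ = C_T.mulVec λ satisfies K2.mulVec u2 − T2ᵀ.mulVec λ̃ = f2 and T2.mulVec u2 = T1.mulVec u1. -/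
open Matrix

/-- With `C1 = C_T * T1` and `C2 = C_T * T2` (`C_T` symmetric invertible), the Mortar
right-hand side contribution rewrites through the trace operator,
`C1ᵀ.mulVec λ = T1ᵀ.mulVec (C_T.mulVec λ)`, and the local Dirichlet problem written
with Mortar operators is equivalent to the one written with trace operators and the
rescaled multiplier `λ̃ = C_T.mulVec λ`. -/
theorem trace_operator_iteration_equivalence {m n n₂ : ℕ}
    (C_T : Matrix (Fin m) (Fin m) ℝ) (hsymm : C_T.IsSymm) (hunit : IsUnit C_T.det)
    (C1 : Matrix (Fin m) (Fin n) ℝ) (C2 : Matrix (Fin m) (Fin n₂) ℝ)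
    (T1 : Matrix (Fin m) (Fin n) ℝ) (T2 : Matrix (Fin m) (Fin n₂) ℝ)
    (hC1 : C1 = C_T * T1) (hC2 : C2 = C_T * T2) :
    (∀ lam : Fin m → ℝ, C1ᵀ.mulVec lam = T1ᵀ.mulVec (C_T.mulVec lam)) ∧
    (∀ (K2 : Matrix (Fin n₂) (Fin n₂) ℝ) (f2 : Fin n₂ → ℝ)
        (u1 : Fin n → ℝ) (u2 : Fin n₂ → ℝ) (lam : Fin m → ℝ),
      (K2.mulVec u2 - C2ᵀ.mulVec lam = f2 ∧ C2.mulVec u2 = C1.mulVec u1) ↔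
        (K2.mulVec u2 - T2ᵀ.mulVec (C_T.mulVec lam) = f2 ∧
          T2.mulVec u2 = T1.mulVec u1)) := by
  have key : ∀ {k : ℕ} (A : Matrix (Fin m) (Fin k) ℝ) (v : Fin m → ℝ),
      (C_T * A)ᵀ.mulVec v = Aᵀ.mulVec (C_T.mulVec v) := by
    intro k A v
    rw [transpose_mul, ← mulVec_mulVec, hsymm.eq]
  constructor
  · intro lam
    rw [hC1, key]
  · intro K2 f2 u1 u2 lam
    have h1 : C2ᵀ.mulVec lam = T2ᵀ.mulVec (C_T.mulVec lam) := by rw [hC2, key]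
    have h2 : C2.mulVec u2 = C1.mulVec u1 ↔ T2.mulVec u2 = T1.mulVec u1 := by
      rw [hC2, hC1, ← mulVec_mulVec, ← mulVec_mulVec]
      constructor
      · intro h
        have := congrArg (C_T⁻¹.mulVec) h
        simpa [mulVec_mulVec, ← Matrix.mul_assoc, nonsing_inv_mul C_T hunit] using this
      · intro h; rw [h]
    rw [h1, h2]
end
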